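/- Let X be the nonsingular projective toric 4-fold (the nonsingular toric Fano 4-fold of type M_5) whose fan Σ has primitive generators G(Σ) = {x_1,…,x_8} and primitive relations x_1 + x_8 = x_5, x_4 + x_5 = x_7, x_6 + x_7 = x_1, x_1 + x_2 + x_3 = x_6, x_2 + x_3 + x_5 = x_6 + x_8, x_2 + x_3 + x_7 = 0, x_4 + x_6 + x_8 = 0. Then X admits no totally nondegenerate finite morphism from an abelian surface. -/

import Mathlib

open Finset

/-- An abelian surface over `ℂ`, recorded abstractly through its group `Div` of
divisor classes modulo algebraic equivalence, the intersection pairing, and the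
effectivity and ampleness predicates.  The listed axioms are standard facts
about divisors on an abelian surface. -/
structure AbelianSurface (Div : Type) [AddCommGroup Div] : Type where
  /-- the intersection pairing `D.E` on the abelian surface -/
  inter : Div →+ Div →+ ℤ
  inter_comm : ∀ D E : Div, inter D E = inter E D
  /-- `Effective D` ↔ `D` is the class of a (nonzero or zero) effective divisor -/
  Effective : Div → Prop
  effective_zero : Effective 0
  effective_add : ∀ {D E : Div}, Effective D → Effective E → Effective (D + E)
  /-- on an abelian surface two effective divisors intersect nonnegatively -/
  inter_nonneg_of_effective : ∀ {D E : Div}, Effective D → Effective E → 0 ≤ inter D E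
  /-- `Ample D` ↔ `D` is the class of an ample divisor -/
  Ample : Div → Prop
  /-- on an abelian surface an effective divisor with positive self-intersection is ample -/
  ample_of_effective_of_sq_pos : ∀ {D : Div}, Effective D → 0 < inter D D → Ample D
  /-- an ample divisor meets every nonzero effective divisor positively -/
  inter_pos_of_ample : ∀ {D E : Div}, Ample D → Effective E → E ≠ 0 → 0 < inter D E
  /-- an ample divisor has positive self-intersection -/
  sq_pos_of_ample : ∀ {D : Div}, Ample D → 0 < inter D D

/-- A complete nonsingular toric 4-fold `X`, presented by the primitive
generators `x_1, …, x_n ∈ N = ℤ⁴` of its fan `Σ` together with the predicate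
`IsCone` recording which subsets of the rays span a cone of `Σ`. -/
structure ToricFourfold (n : ℕ) : Type where
  /-- the set `G(Σ)` of primitive generators `x_1, …, x_n` of `Σ` in `N = ℤ⁴` -/
  gen : Fin n → Fin 4 → ℤ
  gen_injective : Function.Injective gen
  /-- `IsCone S` ↔ the rays `{x_i : i ∈ S}` span a cone of `Σ` -/
  IsCone : Finset (Fin n) → Prop
  isCone_empty : IsCone ∅
  isCone_singleton : ∀ i : Fin n, IsCone {i}
  isCone_mono : ∀ {S T : Finset (Fin n)}, S ⊆ T → IsCone T → IsCone S
  /-- nonsingularity: the generators of each cone form part of a `ℤ`-basis of `N` -/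
  nonsingular : ∀ {S : Finset (Fin n)}, IsCone S →
    ∃ b : Module.Basis (Fin 4) ℤ (Fin 4 → ℤ), ∃ ι : {x // x ∈ S} → Fin 4,
      Function.Injective ι ∧ ∀ i : {x // x ∈ S}, gen i.1 = b (ι i)
  /-- completeness: the cones of `Σ` cover `N_ℚ = ℚ⁴` -/
  complete : ∀ v : Fin 4 → ℚ, ∃ S : Finset (Fin n), IsCone S ∧
    ∃ c : Fin n → ℚ, (∀ i, 0 ≤ c i) ∧ (∀ i, i ∉ S → c i = 0) ∧
      ∀ k, v k = ∑ i, c i * (gen i k : ℚ)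

/-- A primitive collection of the fan of `X` (in the sense of Batyrev):
a minimal subset of the set of rays not spanning a cone. -/
def ToricFourfold.IsPrimitiveCollection {n : ℕ} (X : ToricFourfold n)
    (P : Finset (Fin n)) : Prop :=
  ¬ X.IsCone P ∧ ∀ Q : Finset (Fin n), Q ⊂ P → X.IsCone Q

/-- An (equivariant) isomorphism of complete nonsingular toric 4-folds,
i.e. an isomorphism of the corresponding fans. -/
def ToricFourfold.Iso {m n : ℕ} (X : ToricFourfold m) (Y : ToricFourfold n) : Prop :=
  ∃ (e : Fin m ≃ Fin n) (g : Matrix (Fin 4) (Fin 4) ℤ), IsUnit g.det ∧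
    (∀ i, Y.gen (e i) = g.mulVec (X.gen i)) ∧
    ∀ S : Finset (Fin m), X.IsCone S ↔ Y.IsCone (S.image e)

/-- A projective nonsingular toric 4-fold: a complete nonsingular toric 4-fold
together with the predicate recording which `T_N`-invariant divisors
`∑ i, c i • D i` are ample, and (projectivity) an ample effective such divisor. -/
structure ProjToricFourfold (n : ℕ) : Type extends ToricFourfold n where
  /-- `IsAmple c` ↔ the `T_N`-invariant divisor `∑ i, c i • D i` is ample on `X` -/
  IsAmple : (Fin n → ℤ) → Prop
  /-- projectivity: there is an ample effective `T_N`-invariant divisor -/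
  exists_ample : ∃ c : Fin n → ℤ, (∀ i, 0 ≤ c i) ∧ IsAmple c

/-- `X` is Fano: the anticanonical divisor `∑ i, D i` is ample. -/
def ProjToricFourfold.IsFano {n : ℕ} (X : ProjToricFourfold n) : Prop :=
  X.IsAmple fun _ => 1

/-- A totally nondegenerate finite morphism `φ : A → X` from an abelian surface
`A` to a complete nonsingular toric 4-fold `X`, recorded through the pullbacks
`C i = φ*(D i)` of the `T_N`-invariant prime divisors `D 1, …, D n` of `X`:
total nondegeneracy says that each `D i` meets `φ(A)`, so that each `C i` is a
nonzero effective divisor on `A`. -/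
structure TNDMorphism {n : ℕ} (X : ToricFourfold n) {Div : Type} [AddCommGroup Div]
    (A : AbelianSurface Div) : Type where
  /-- the pullbacks `C i = φ*(D i)` -/
  C : Fin n → Div
  effective : ∀ i, A.Effective (C i)
  /-- total nondegeneracy: `D i ∩ φ(A) ≠ ∅`, so `C i` is a nonzero effective divisor -/
  ne_zero : ∀ i, C i ≠ 0
  /-- if `{x i, x j}` spans no cone of `Σ` then `D i ∩ D j = ∅`, hence the
  pullbacks have intersection number zero -/
  inter_eq_zero : ∀ {i j : Fin n}, i ≠ j → ¬ X.IsCone {i, j} → A.inter (C i) (C j) = 0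
  /-- for every `m ∈ M` the pullback of the principal divisor
  `div 𝐞(m) = ∑ i ⟨m, x i⟩ D i` is (algebraically equivalent to) zero -/
  principal_rel : ∀ m : Fin 4 → ℤ, ∑ i, (∑ k, m k * X.gen i k) • C i = 0

/-- A totally nondegenerate finite morphism to a projective nonsingular toric
4-fold; finiteness of `φ` moreover makes pullbacks of ample divisors ample. -/
structure TNDMorphismProj {n : ℕ} (X : ProjToricFourfold n) {Div : Type} [AddCommGroup Div]
    (A : AbelianSurface Div) : Type extends TNDMorphism X.toToricFourfold A where
  /-- the pullback of an ample divisor under the finite morphism `φ` is ample -/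
  pull_ample : ∀ c : Fin n → ℤ, X.IsAmple c → A.Ample (∑ i, c i • C i)

/-- `X` admits a totally nondegenerate finite morphism from an abelian surface. -/
def ProjToricFourfold.HasTND {n : ℕ} (X : ProjToricFourfold n) : Prop :=
  ∃ (Div : Type) (inst : AddCommGroup Div) (A : @AbelianSurface Div inst),
    Nonempty (@TNDMorphismProj n X Div inst A)

/-- A totally nondegenerate embedding `φ : A ↪ X` of an abelian surface into a
projective nonsingular toric 4-fold: a totally nondegenerate finite morphism
which is a closed embedding.  Besides the finite-morphism data we record the
intersection-theoretic data available for an embedded surface: the quadruple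
intersection numbers `quad i j k l = D i · D j · D k · D l` on `X`, the class
`[A] = ∑ k l, aClass k l • (D k · D l)` of `A` in the Chow group `A²(X)`, the
compatibility `(φ*D i)·(φ*D j) = D i · D j · [A]`, and Van de Ven's relation
`c₂(X)·[A] = [A]²` where `c₂(X) = ∑_{i<j} D i · D j` for a nonsingular complete
toric variety. -/
structure TNDEmbedding {n : ℕ} (X : ProjToricFourfold n) {Div : Type} [AddCommGroup Div]
    (A : AbelianSurface Div) : Type extends TNDMorphismProj X A where
  /-- the intersection numbers `D i · D j · D k · D l` on `X` -/
  quad : Fin n → Fin n → Fin n → Fin n → ℤ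
  /-- the coefficients of the class `[A] ∈ A²(X)` in terms of the classes `D k · D l` -/
  aClass : Fin n → Fin n → ℤ
  /-- for the embedded surface `A ⊂ X`, `(φ*D i)·(φ*D j) = D i · D j · [A]` -/
  inter_eq_quad : ∀ i j : Fin n,
    A.inter (C i) (C j) = ∑ k, ∑ l, aClass k l * quad i j k l
  /-- Van de Ven's relation `c₂(X)·[A] = [A]²` -/
  van_de_ven : ∑ i, ∑ j ∈ Finset.Ioi i, A.inter (C i) (C j) =
    ∑ k, ∑ l, ∑ k', ∑ l', aClass k l * aClass k' l' * quad k l k' l'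

/-- `X` admits a totally nondegenerate embedding of an abelian surface. -/
def ProjToricFourfold.HasTNDEmbedding {n : ℕ} (X : ProjToricFourfold n) : Prop :=
  ∃ (Div : Type) (inst : AddCommGroup Div) (A : @AbelianSurface Div inst),
    Nonempty (@TNDEmbedding n X Div inst A)

/-- `ψ : Y → X` is a 2-blow-up: an equivariant blow-up of `X` along a
`T_N`-invariant subvariety of codimension 2.  On fans this is the star
subdivision of the fan of `X` at a 2-dimensional cone `{x i, x j}`, the new ray
(indexed last) being generated by `x i + x j`. -/
def IsTwoBlowUp {m n : ℕ} (Y : ProjToricFourfold m) (X : ProjToricFourfold n) : Prop :=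
  ∃ h : m = n + 1, ∃ i j : Fin n, i ≠ j ∧ X.IsCone {i, j} ∧
    (∀ k : Fin n, Y.gen (finCongr h.symm k.castSucc) = X.gen k) ∧
    Y.gen (finCongr h.symm (Fin.last n)) = X.gen i + X.gen j ∧
    ∀ S : Finset (Fin n),
      (Y.IsCone (S.image fun k => finCongr h.symm k.castSucc) ↔
        X.IsCone S ∧ ¬ {i, j} ⊆ S) ∧
      (Y.IsCone (insert (finCongr h.symm (Fin.last n))
          (S.image fun k => finCongr h.symm k.castSucc)) ↔
        ¬ {i, j} ⊆ S ∧ X.IsCone (S ∪ {i, j}))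

/-- The fan of `X` splits (after a change of coordinates in `N = ℤ⁴`) as the
product of two 2-dimensional complete fans, i.e. `X ≅ X₁ × X₂` for nonsingular
complete toric surfaces `X₁`, `X₂`.  When `X` is moreover Fano, the two factors
are nonsingular toric del Pezzo surfaces. -/
def ProjToricFourfold.IsProductOfSurfaces {n : ℕ} (X : ProjToricFourfold n) : Prop :=
  ∃ g : Matrix (Fin 4) (Fin 4) ℤ, IsUnit g.det ∧
    ∃ σ : Fin n → Bool,
      (∀ i, σ i = true → g.mulVec (X.gen i) 2 = 0 ∧ g.mulVec (X.gen i) 3 = 0) ∧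
      (∀ i, σ i = false → g.mulVec (X.gen i) 0 = 0 ∧ g.mulVec (X.gen i) 1 = 0) ∧
      ∀ S : Finset (Fin n), X.IsCone S ↔
        (X.IsCone (S.filter fun i => σ i = true) ∧ X.IsCone (S.filter fun i => σ i = false))

/-!
The rays `x_1, x_2, x_4, x_6` contain no primitive collection, so they span a
nonsingular cone and are part of a basis of `N`; pulling back the principal divisors
of the dual characters gives `C_2 = C_3 = C_1 + C_5 + C_7`, `C_4 = C_5 + C_8` and
`C_8 = C_1 + C_6` for the pullbacks `C_i` of the `D_i`. The primitive collections
`{x_1, x_8}`, `{x_4, x_5}`, `{x_6, x_7}` then force `C_6 · C_i = 0` for every `i`,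
which is impossible since `C_6` is a nonzero effective divisor and the pullback of an
ample divisor is ample. In the code `x_k` is `X.gen (k-1)` and `C_k` is `φ.C (k-1)`.
-/

namespace ToricFourfold

variable {n : ℕ} (X : ToricFourfold n)

theorem exists_isPrimitiveCollection_subset_of_not_isCone {S : Finset (Fin n)}
    (hS : ¬ X.IsCone S) : ∃ P ⊆ S, X.IsPrimitiveCollection P := by
  induction S using Finset.strongInductionOn with
  | _ S ih =>
    by_cases h : ∀ Q ⊂ S, X.IsCone Q
    · exact ⟨S, subset_rfl, hS, h⟩
    · push Not at h
      obtain ⟨Q, hQS, hQ⟩ := h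
      obtain ⟨P, hPQ, hP⟩ := ih Q hQS hQ
      exact ⟨P, hPQ.trans hQS.subset, hP⟩

theorem isCone_of_forall_subset_not_isPrimitiveCollection {S : Finset (Fin n)}
    (hS : ∀ P ⊆ S, ¬ X.IsPrimitiveCollection P) : X.IsCone S := by
  by_contra h
  obtain ⟨P, hPS, hP⟩ := X.exists_isPrimitiveCollection_subset_of_not_isCone h
  exact hS P hPS hP

theorem exists_linearMap_apply_gen_eq {S : Finset (Fin n)} (hS : X.IsCone S)
    (v : Fin n → ℤ) : ∃ f : (Fin 4 → ℤ) →ₗ[ℤ] ℤ, ∀ i ∈ S, f (X.gen i) = v i := by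
  obtain ⟨b, ι, hι, hb⟩ := X.nonsingular hS
  refine ⟨b.constr ℤ (Function.extend ι (fun i => v i.1) 0), fun i hi => ?_⟩
  rw [hb ⟨i, hi⟩, Module.Basis.constr_basis, hι.extend_apply]

end ToricFourfold

namespace AbelianSurface

variable {Div : Type} [AddCommGroup Div] (A : AbelianSurface Div)

/-- Otherwise `D` would be ample and meet `E` positively. -/
theorem inter_self_eq_zero_of_inter_eq_zero {D E : Div} (hD : A.Effective D)
    (hE : A.Effective E) (hE₀ : E ≠ 0) (hDE : A.inter D E = 0) : A.inter D D = 0 := by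
  refine le_antisymm (not_lt.mp fun hpos => ?_) (A.inter_nonneg_of_effective hD hD)
  have := A.inter_pos_of_ample (A.ample_of_effective_of_sq_pos hD hpos) hE hE₀
  omega

end AbelianSurface

namespace TNDMorphism

variable {n : ℕ} {X : ToricFourfold n} {Div : Type} [AddCommGroup Div]
  {A : AbelianSurface Div} (φ : TNDMorphism X A)

theorem sum_linearMap_smul_eq_zero (f : (Fin 4 → ℤ) →ₗ[ℤ] ℤ) :
    ∑ i, f (X.gen i) • φ.C i = 0 := by
  convert φ.principal_rel fun k => f (Pi.single k 1) using 3 with i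
  rw [f.pi_apply_eq_sum_univ]
  refine sum_congr rfl fun k _ => ?_
  rw [smul_eq_mul, mul_comm]
  congr 2 with j
  rw [Pi.single_apply]
  exact if_congr eq_comm rfl rfl

theorem inter_nonneg (i j : Fin n) : 0 ≤ A.inter (φ.C i) (φ.C j) :=
  A.inter_nonneg_of_effective (φ.effective i) (φ.effective j)

end TNDMorphism

theorem TNDMorphismProj.exists_inter_ne_zero {n : ℕ} {X : ProjToricFourfold n} {Div : Type}
    [AddCommGroup Div] {A : AbelianSurface Div} (φ : TNDMorphismProj X A) (i : Fin n) :
    ∃ j, A.inter (φ.C i) (φ.C j) ≠ 0 := by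
  by_contra! h
  obtain ⟨c, -, hc⟩ := X.exists_ample
  have hpos := A.inter_pos_of_ample (φ.pull_ample c hc) (φ.effective i) (φ.ne_zero i)
  simp only [map_sum, map_zsmul, AddMonoidHom.finsetSum_apply, AddMonoidHom.smul_apply,
    A.inter_comm _ (φ.C i), h, smul_zero, sum_const_zero] at hpos
  exact hpos.false

theorem TNDMorphism.pullback_relations_of_typeM5 {X : ToricFourfold 8} {Div : Type}
    [AddCommGroup Div] {A : AbelianSurface Div} (φ : TNDMorphism X A)
    (hcone : X.IsCone {0, 1, 3, 5})
    (h1 : X.gen 0 + X.gen 7 = X.gen 4)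
    (h2 : X.gen 3 + X.gen 4 = X.gen 6)
    (h4 : X.gen 0 + X.gen 1 + X.gen 2 = X.gen 5)
    (h7 : X.gen 3 + X.gen 5 + X.gen 7 = 0) :
    φ.C 1 = φ.C 0 + φ.C 4 + φ.C 6 ∧ φ.C 2 = φ.C 0 + φ.C 4 + φ.C 6 ∧
      φ.C 3 = φ.C 0 + φ.C 4 + φ.C 5 ∧ φ.C 7 = φ.C 0 + φ.C 5 := by
  have hx2 : X.gen 2 = X.gen 5 - X.gen 0 - X.gen 1 := by linear_combination h4
  have hx7 : X.gen 7 = -X.gen 3 - X.gen 5 := by linear_combination h7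
  have hx4 : X.gen 4 = X.gen 0 - X.gen 3 - X.gen 5 := by linear_combination h7 - h1
  have hx6 : X.gen 6 = X.gen 0 - X.gen 5 := by linear_combination h7 - h1 - h2
  have hrel : ∀ t₀ t₁ t₃ t₅ : ℤ, t₀ • (φ.C 0 - φ.C 2 + φ.C 4 + φ.C 6) + t₁ • (φ.C 1 - φ.C 2)
      + t₃ • (φ.C 3 - φ.C 4 - φ.C 7) + t₅ • (φ.C 2 + φ.C 5 - φ.C 4 - φ.C 6 - φ.C 7) = 0 := by
    intro t₀ t₁ t₃ t₅
    obtain ⟨f, hf⟩ := X.exists_linearMap_apply_gen_eq hcone ![t₀, t₁, 0, t₃, 0, t₅, 0, 0]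
    have h := φ.sum_linearMap_smul_eq_zero f
    simp only [Fin.sum_univ_eight, hx2, hx4, hx6, hx7, map_sub, map_neg,
      hf 0 (by decide), hf 1 (by decide), hf 3 (by decide), hf 5 (by decide),
      Matrix.cons_val] at h
    linear_combination (norm := module) h
  refine ⟨?_, ?_, ?_, ?_⟩
  · linear_combination (norm := module) hrel 0 1 0 0 - hrel 1 0 0 0
  · linear_combination (norm := module) -hrel 1 0 0 0
  · linear_combination (norm := module) hrel 0 0 1 0 - hrel 1 0 0 1
  · linear_combination (norm := module) -hrel 1 0 0 1

theorem no_tnd_morphism_typeM5_general (X : ProjToricFourfold 8)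
    (hPC : ∀ P : Finset (Fin 8), X.toToricFourfold.IsPrimitiveCollection P ↔
      (P = {0, 7} ∨ P = {3, 4} ∨ P = {5, 6} ∨ P = {0, 1, 2} ∨ P = {1, 2, 4} ∨
        P = {1, 2, 6} ∨ P = {3, 5, 7}))
    (h1 : X.gen 0 + X.gen 7 = X.gen 4)
    (h2 : X.gen 3 + X.gen 4 = X.gen 6)
    (h4 : X.gen 0 + X.gen 1 + X.gen 2 = X.gen 5)
    (h7 : X.gen 3 + X.gen 5 + X.gen 7 = 0) :
    ¬ X.HasTND := by
  rintro ⟨Div, _, A, ⟨φ⟩⟩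
  have hcone : X.IsCone {0, 1, 3, 5} :=
    X.isCone_of_forall_subset_not_isPrimitiveCollection fun P hP hPc => by
      rcases (hPC P).mp hPc with rfl | rfl | rfl | rfl | rfl | rfl | rfl <;> revert hP <;> decide
  have h07 : A.inter (φ.C 0) (φ.C 7) = 0 := φ.inter_eq_zero (by decide) ((hPC _).mpr (by simp)).1
  have h34 : A.inter (φ.C 3) (φ.C 4) = 0 := φ.inter_eq_zero (by decide) ((hPC _).mpr (by simp)).1
  have h56 : A.inter (φ.C 5) (φ.C 6) = 0 := φ.inter_eq_zero (by decide) ((hPC _).mpr (by simp)).1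
  obtain ⟨hC1, hC2, hC3, hC7⟩ := φ.pullback_relations_of_typeM5 hcone h1 h2 h4 h7
  rw [hC7] at h07
  rw [hC3] at h34
  simp only [map_add, AddMonoidHom.add_apply] at h07 h34
  have h50 : A.inter (φ.C 5) (φ.C 0) = 0 := by
    rw [A.inter_comm]; linarith [φ.inter_nonneg 0 0, φ.inter_nonneg 0 5]
  have h54 : A.inter (φ.C 5) (φ.C 4) = 0 := by
    linarith [φ.inter_nonneg 0 4, φ.inter_nonneg 4 4, φ.inter_nonneg 5 4]
  have h55 : A.inter (φ.C 5) (φ.C 5) = 0 :=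
    A.inter_self_eq_zero_of_inter_eq_zero (φ.effective 5) (φ.effective 6) (φ.ne_zero 6) h56
  obtain ⟨j, hj⟩ := φ.exists_inter_ne_zero 5
  fin_cases j <;> simp [hC1, hC2, hC3, hC7, h50, h54, h55, h56] at hj

/-- **Section 5 (f), type `ℳ₅`.** Let `X` be the nonsingular projective toric
4-fold (the nonsingular toric Fano 4-fold of type `ℳ₅`) whose fan `Σ` has
`G(Σ) = {x_1, …, x_8}` and primitive relations `x_1 + x_8 = x_5`,
`x_4 + x_5 = x_7`, `x_6 + x_7 = x_1`, `x_1 + x_2 + x_3 = x_6`,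
`x_2 + x_3 + x_5 = x_6 + x_8`, `x_2 + x_3 + x_7 = 0`, `x_4 + x_6 + x_8 = 0`.
Then `X` admits no totally nondegenerate finite morphism from an abelian
surface.  Rays are indexed from `0`, so `x_k` is `X.gen (k-1)`. -/
theorem no_tnd_morphism_typeM5 (X : ProjToricFourfold 8)
    (hPC : ∀ P : Finset (Fin 8), X.toToricFourfold.IsPrimitiveCollection P ↔
      (P = {0, 7} ∨ P = {3, 4} ∨ P = {5, 6} ∨ P = {0, 1, 2} ∨ P = {1, 2, 4} ∨
        P = {1, 2, 6} ∨ P = {3, 5, 7}))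
    (h1 : X.gen 0 + X.gen 7 = X.gen 4)
    (h2 : X.gen 3 + X.gen 4 = X.gen 6)
    (h3 : X.gen 5 + X.gen 6 = X.gen 0)
    (h4 : X.gen 0 + X.gen 1 + X.gen 2 = X.gen 5)
    (h5 : X.gen 1 + X.gen 2 + X.gen 4 = X.gen 5 + X.gen 7)
    (h6 : X.gen 1 + X.gen 2 + X.gen 6 = 0)
    (h7 : X.gen 3 + X.gen 5 + X.gen 7 = 0) :
    ¬ X.HasTND :=
  no_tnd_morphism_typeM5_general X hPC h1 h2 h4 h7
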